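/- In the continuous two-player zero-sum game setting, suppose the game 𝒢 = (S1, S2, u) has value V, and let (s^1_t)_{t≥1}, (s^2_t)_{t≥1} be sequences of plays such that both players have sublinear realized regret. Then lim_{t→∞} (1/t)·Σ_{τ=1}^t u(s^1_τ, s^2_τ) = V. -/

import Mathlib

/-!
The empirical distribution of player 2's first `t` plays is a mixed strategy, so the value is
at most player 1's best-response payoff against it, `(1/t) sup_a Σ_τ u(a, s²_τ)`; subtracting
player 1's average regret shows that the average payoff is eventually above `V - ε`.
Player 2's regret is player 1's regret in the game with the roles swapped and the payoff
negated, whose value is `-V`, and the same argument bounds the average payoff from above.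
-/

open Finset MeasureTheory Filter
open scoped ENNReal

lemma Real.iSup_neg_eq_neg_iInf {ι : Sort*} (f : ι → ℝ) : ⨆ i, -f i = -⨅ i, f i := by
  simpa using (Real.mul_iInf_of_nonpos (r := -1) (by norm_num) f).symm

lemma Real.iInf_neg_eq_neg_iSup {ι : Sort*} (f : ι → ℝ) : ⨅ i, -f i = -⨆ i, f i := by
  simpa using (Real.mul_iSup_of_nonpos (r := -1) (by norm_num) f).symm

section EmpiricalMeasure

variable {α : Type*} [MeasurableSpace α]

noncomputable def empiricalMeasure (s : ℕ → α) (t : ℕ) : Measure α :=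
  (t : ℝ≥0∞)⁻¹ • ∑ τ ∈ Icc 1 t, Measure.dirac (s τ)

lemma isProbabilityMeasure_empiricalMeasure (s : ℕ → α) {t : ℕ} (ht : t ≠ 0) :
    IsProbabilityMeasure (empiricalMeasure s t) := by
  constructor
  simp [empiricalMeasure, Measure.finsetSum_apply,
    ENNReal.inv_mul_cancel (Nat.cast_ne_zero.2 ht) (ENNReal.natCast_ne_top t)]

lemma integral_empiricalMeasure [MeasurableSingletonClass α] (s : ℕ → α) (t : ℕ) (f : α → ℝ) :
    ∫ x, f x ∂empiricalMeasure s t = (1 / t) * ∑ τ ∈ Icc 1 t, f (s τ) := by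
  rw [empiricalMeasure, integral_smul_measure,
    integral_finsetSum_measure fun τ _ => integrable_dirac enorm_lt_top]
  simp [integral_dirac]

end EmpiricalMeasure

section RegretBound

variable {S1 S2 : Type*} [TopologicalSpace S1] [CompactSpace S1]
  [TopologicalSpace S2] [CompactSpace S2]

-- `limsup` in `ℝ` is the junk value `0` for sequences unbounded above, hence this bound.
lemma isBoundedUnder_le_regret (u : C(S1 × S2, ℝ)) (s1 : ℕ → S1) (s2 : ℕ → S2) :
    IsBoundedUnder (· ≤ ·) atTop (fun t : ℕ => (1 / (t : ℝ)) *
      ((⨆ a : S1, ∑ τ ∈ Icc 1 t, u (a, s2 τ)) - ∑ τ ∈ Icc 1 t, u (s1 τ, s2 τ))) := by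
  have hsum : ∀ (t : ℕ) (p : ℕ → S1 × S2), |∑ τ ∈ Icc 1 t, u (p τ)| ≤ t * ‖u‖ := fun t p =>
    calc |∑ τ ∈ Icc 1 t, u (p τ)| ≤ ∑ τ ∈ Icc 1 t, ‖u‖ :=
          (abs_sum_le_sum_abs _ _).trans (sum_le_sum fun τ _ => u.norm_coe_le_norm (p τ))
      _ = t * ‖u‖ := by simp
  refine isBoundedUnder_of ⟨2 * ‖u‖, fun t => ?_⟩
  have hbest : (⨆ a : S1, ∑ τ ∈ Icc 1 t, u (a, s2 τ)) ≤ t * ‖u‖ :=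
    Real.iSup_le (fun a => (le_abs_self _).trans (hsum t fun τ => (a, s2 τ))) (by positivity)
  have hplay := neg_le_of_abs_le (hsum t fun τ => (s1 τ, s2 τ))
  rcases eq_or_ne t 0 with rfl | ht
  · simp
  · rw [one_div_mul_eq_div, div_le_iff₀ (by positivity)]
    linarith

end RegretBound

instance {α : Type*} [MeasurableSpace α] [Nonempty α] : Nonempty (ProbabilityMeasure α) :=
  ⟨⟨Measure.dirac (Classical.arbitrary α), inferInstance⟩⟩

section MixedExtension

variable {S1 S2 : Type*} [TopologicalSpace S1] [MeasurableSpace S1]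
  [TopologicalSpace S2] [MeasurableSpace S2]

noncomputable def mixedPayoff (u : C(S1 × S2, ℝ)) (x1 : ProbabilityMeasure S1)
    (x2 : ProbabilityMeasure S2) : ℝ :=
  ∫ s, u s ∂((x1 : Measure S1).prod (x2 : Measure S2))

lemma abs_mixedPayoff_le [CompactSpace S1] [CompactSpace S2] (u : C(S1 × S2, ℝ))
    (x1 : ProbabilityMeasure S1) (x2 : ProbabilityMeasure S2) : |mixedPayoff u x1 x2| ≤ ‖u‖ := by
  simpa [mixedPayoff] using
    norm_integral_le_of_norm_le_const (μ := (x1 : Measure S1).prod (x2 : Measure S2))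
      (Eventually.of_forall u.norm_coe_le_norm)

end MixedExtension

section DualGame

variable {S1 S2 : Type*} [TopologicalSpace S1] [TopologicalSpace S2]

def ContinuousMap.dualGame (u : C(S1 × S2, ℝ)) : C(S2 × S1, ℝ) :=
  -u.comp ContinuousMap.prodSwap

@[simp]
lemma ContinuousMap.dualGame_apply (u : C(S1 × S2, ℝ)) (p : S2 × S1) :
    u.dualGame p = -u p.swap :=
  rfl

end DualGame

section ZeroSumGame

variable {S1 S2 : Type*} [MetricSpace S1] [CompactSpace S1] [MeasurableSpace S1] [BorelSpace S1]
  [MetricSpace S2] [CompactSpace S2] [MeasurableSpace S2] [BorelSpace S2]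

lemma mixedPayoff_le_iSup_integral (u : C(S1 × S2, ℝ)) (x1 : ProbabilityMeasure S1)
    (x2 : ProbabilityMeasure S2) :
    mixedPayoff u x1 x2 ≤ ⨆ a : S1, ∫ b, u (a, b) ∂(x2 : Measure S2) := by
  have hint : Integrable u ((x1 : Measure S1).prod (x2 : Measure S2)) :=
    u.continuous.integrable_of_hasCompactSupport (isClosed_tsupport _).isCompact
  have hbdd : BddAbove (Set.range fun a : S1 => ∫ b, u (a, b) ∂(x2 : Measure S2)) := by
    refine ⟨‖u‖, Set.forall_mem_range.2 fun a => ?_⟩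
    refine (le_abs_self _).trans ?_
    simpa using norm_integral_le_of_norm_le_const (μ := (x2 : Measure S2))
      (Eventually.of_forall fun b => u.norm_coe_le_norm (a, b))
  rw [mixedPayoff, integral_prod _ hint]
  calc ∫ a, ∫ b, u (a, b) ∂(x2 : Measure S2) ∂(x1 : Measure S1)
      ≤ ∫ _, ⨆ a : S1, ∫ b, u (a, b) ∂(x2 : Measure S2) ∂(x1 : Measure S1) :=
        integral_mono hint.integral_prod_left (integrable_const _) (le_ciSup hbdd)
    _ = ⨆ a : S1, ∫ b, u (a, b) ∂(x2 : Measure S2) := by simp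

lemma iInf_iSup_mixedPayoff_le [Nonempty S1] (u : C(S1 × S2, ℝ)) (s2 : ℕ → S2) {t : ℕ}
    (ht : t ≠ 0) :
    ⨅ x2, ⨆ x1, mixedPayoff u x1 x2 ≤ (1 / (t : ℝ)) * ⨆ a : S1, ∑ τ ∈ Icc 1 t, u (a, s2 τ) := by
  let ν : ProbabilityMeasure S2 :=
    ⟨empiricalMeasure s2 t, isProbabilityMeasure_empiricalMeasure s2 ht⟩
  have hbdd : BddBelow (Set.range fun x2 => ⨆ x1, mixedPayoff u x1 x2) := by
    obtain ⟨x1⟩ : Nonempty (ProbabilityMeasure S1) := inferInstance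
    refine ⟨-‖u‖, Set.forall_mem_range.2 fun x2 => ?_⟩
    have hbddAbove : BddAbove (Set.range fun x1 => mixedPayoff u x1 x2) :=
      ⟨‖u‖, Set.forall_mem_range.2 fun x1 => le_of_abs_le (abs_mixedPayoff_le u x1 x2)⟩
    exact (neg_le_of_abs_le (abs_mixedPayoff_le u x1 x2)).trans (le_ciSup hbddAbove x1)
  calc ⨅ x2, ⨆ x1, mixedPayoff u x1 x2 ≤ ⨆ x1, mixedPayoff u x1 ν := ciInf_le hbdd ν
    _ ≤ ⨆ a : S1, ∫ b, u (a, b) ∂(ν : Measure S2) :=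
        ciSup_le fun x1 => mixedPayoff_le_iSup_integral u x1 ν
    _ = (1 / (t : ℝ)) * ⨆ a : S1, ∑ τ ∈ Icc 1 t, u (a, s2 τ) := by
        simp_rw [Real.mul_iSup_of_nonneg (by positivity : (0 : ℝ) ≤ 1 / t)]
        exact iSup_congr fun a => integral_empiricalMeasure s2 t _

lemma eventually_lt_avgPayoff [Nonempty S1] (u : C(S1 × S2, ℝ)) {V : ℝ}
    (hV : V ≤ ⨅ x2, ⨆ x1, mixedPayoff u x1 x2) (s1 : ℕ → S1) (s2 : ℕ → S2)
    (hreg : limsup (fun t : ℕ => (1 / (t : ℝ)) *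
        ((⨆ a : S1, ∑ τ ∈ Icc 1 t, u (a, s2 τ)) - ∑ τ ∈ Icc 1 t, u (s1 τ, s2 τ))) atTop ≤ 0)
    {v : ℝ} (hv : v < V) :
    ∀ᶠ t : ℕ in atTop, v < (1 / (t : ℝ)) * ∑ τ ∈ Icc 1 t, u (s1 τ, s2 τ) := by
  have hsmall := eventually_lt_of_limsup_lt (hreg.trans_lt (sub_pos.2 hv))
    (isBoundedUnder_le_regret u s1 s2)
  filter_upwards [hsmall, eventually_ne_atTop 0] with t hregret ht
  have hbest := hV.trans (iInf_iSup_mixedPayoff_le u s2 ht)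
  rw [mul_sub] at hregret
  linarith

lemma mixedPayoff_dualGame (u : C(S1 × S2, ℝ)) (x1 : ProbabilityMeasure S1)
    (x2 : ProbabilityMeasure S2) : mixedPayoff u.dualGame x2 x1 = -mixedPayoff u x1 x2 := by
  simp only [mixedPayoff, ContinuousMap.dualGame_apply, integral_neg, integral_prod_swap]

lemma iInf_iSup_mixedPayoff_dualGame (u : C(S1 × S2, ℝ)) :
    ⨅ x1, ⨆ x2, mixedPayoff u.dualGame x2 x1 = -⨆ x1, ⨅ x2, mixedPayoff u x1 x2 := by
  simp only [mixedPayoff_dualGame, Real.iSup_neg_eq_neg_iInf, Real.iInf_neg_eq_neg_iSup]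

end ZeroSumGame

/-- **Convergence of the average payoff to the value under mutual sublinear regret.**
In a continuous two-player zero-sum game `(S1, S2, u)` with value `V`, if along the
plays `(s¹_t), (s²_t)` both players have sublinear realized regret, then
`lim_{t→∞} (1/t) Σ_{τ=1}^t u(s¹_τ, s²_τ) = V`. -/
theorem stmt14 {S1 S2 : Type*}
    [MetricSpace S1] [CompactSpace S1] [Nonempty S1] [MeasurableSpace S1] [BorelSpace S1]
    [MetricSpace S2] [CompactSpace S2] [Nonempty S2] [MeasurableSpace S2] [BorelSpace S2]
    (u : C(S1 × S2, ℝ)) (V : ℝ)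
    (hval₁ : (⨆ x1 : ProbabilityMeasure S1, ⨅ x2 : ProbabilityMeasure S2,
        ∫ s, u s ∂((x1 : Measure S1).prod (x2 : Measure S2))) = V)
    (hval₂ : (⨅ x2 : ProbabilityMeasure S2, ⨆ x1 : ProbabilityMeasure S1,
        ∫ s, u s ∂((x1 : Measure S1).prod (x2 : Measure S2))) = V)
    (s1 : ℕ → S1) (s2 : ℕ → S2)
    -- player 1 has sublinear realized regret
    (hreg1 : limsup (fun t : ℕ => (1 / (t : ℝ)) *
        ((⨆ a : S1, ∑ τ ∈ Icc 1 t, u (a, s2 τ)) -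
          ∑ τ ∈ Icc 1 t, u (s1 τ, s2 τ))) atTop ≤ 0)
    -- player 2 (whose payoff is `-u`) has sublinear realized regret
    (hreg2 : limsup (fun t : ℕ => (1 / (t : ℝ)) *
        ((⨆ b : S2, ∑ τ ∈ Icc 1 t, -u (s1 τ, b)) -
          ∑ τ ∈ Icc 1 t, -u (s1 τ, s2 τ))) atTop ≤ 0) :
    Tendsto (fun t : ℕ => (1 / (t : ℝ)) * ∑ τ ∈ Icc 1 t, u (s1 τ, s2 τ))
      atTop (nhds V) := by
  refine tendsto_order.2 ⟨fun v hv => eventually_lt_avgPayoff u hval₂.ge s1 s2 hreg1 hv,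
    fun v hv => ?_⟩
  -- Player 2's regret in `u` is player 1's regret in `u.dualGame`.
  have hdual : -V ≤ ⨅ x1, ⨆ x2, mixedPayoff u.dualGame x2 x1 := by
    rw [iInf_iSup_mixedPayoff_dualGame]
    exact neg_le_neg hval₁.le
  filter_upwards [eventually_lt_avgPayoff u.dualGame hdual s2 s1 hreg2 (neg_lt_neg hv)]
    with t ht
  simp only [ContinuousMap.dualGame_apply, Prod.swap_prod_mk, sum_neg_distrib, mul_neg] at ht
  linarith
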